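/- Let (M,⊗,1,σ) be a braided monoidal category with equalizers and coequalizers that are preserved by the functors X⊗(−) and (−)⊗X for every object X. Given parallel morphisms f,g: A→B in Hopf(M), define φ_f := m_B(m_B⊗Id_B)(Id_B⊗f⊗Id_B) and φ_g := m_B(m_B⊗Id_B)(Id_B⊗g⊗Id_B): B⊗A⊗B→B, and let π: B→Coeq(φ_f,φ_g) be the coequalizer of (φ_f,φ_g) in M. Then Coeq(φ_f,φ_g) carries a unique Hopf monoid structure such that π is a morphism in Hopf(M), and (Coeq(φ_f,φ_g), π) is the coequalizer of the pair (f,g) in Hopf(M). The same holds in Hopf_coc(M) when f and g are morphisms of cocommutative Hopf monoids. In particular, the cokernel of f: A→B in Hopf(M) is given by the coequalizer in M of the pair (m_B(m_B⊗Id_B)(Id_B⊗f⊗Id_B), m_B(Id_B⊗ε_A⊗Id_B)). -/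

import Mathlib

/-!
Common infrastructure for formalizing results on cocommutative Hopf monoids
in (abelian) symmetric monoidal categories.
-/

open CategoryTheory MonoidalCategory CategoryTheory.Limits

universe v u

namespace HopfSemiabelian

variable {C : Type u} [Category.{v} C] [MonoidalCategory.{v} C]

section HopfBasics
variable [BraidedCategory C]

/-- The underlying object in `C` of a Hopf monoid. -/
abbrev hCar (H : Hopf C) : C := H.X
/-- The multiplication of a Hopf monoid. -/
abbrev hMul (H : Hopf C) : hCar H ⊗ hCar H ⟶ hCar H := MonObj.mul
/-- The unit of a Hopf monoid. -/
abbrev hOne (H : Hopf C) : 𝟙_ C ⟶ hCar H := MonObj.one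
/-- The comultiplication of a Hopf monoid. -/
abbrev hComul (H : Hopf C) : hCar H ⟶ hCar H ⊗ hCar H := ComonObj.comul
/-- The counit of a Hopf monoid. -/
abbrev hCounit (H : Hopf C) : hCar H ⟶ 𝟙_ C := ComonObj.counit
/-- The antipode of a Hopf monoid. -/
abbrev hS (H : Hopf C) : hCar H ⟶ hCar H := HopfObj.antipode

/-- The underlying comonoid in `C` of a Hopf monoid. -/
def hComon (H : Hopf C) : Comon C where
  X := hCar H

/-- The underlying monoid of a Hopf monoid. -/
abbrev hMon (H : Hopf C) : Mon C := { X := hCar H }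

/-- A Hopf monoid is cocommutative if `σ ∘ Δ = Δ`. -/
def IsCocomm (H : Hopf C) : Prop := hComul H ≫ (β_ (hCar H) (hCar H)).hom = hComul H

variable (C) in
/-- `Hopf_coc(M)`: the category of cocommutative Hopf monoids in `C`,
as a full subcategory of `Hopf_ C` (morphisms are bimonoid morphisms). -/
def HopfCoc := ObjectProperty.FullSubcategory (fun H : Hopf C => IsCocomm H)

instance : Category (HopfCoc C) := ObjectProperty.FullSubcategory.category _

/-- The underlying morphism in `C` of a morphism of cocommutative Hopf monoids. -/
def uhom {K A : HopfCoc C} (f : K ⟶ A) : hCar K.obj ⟶ hCar A.obj := f.hom.hom.hom.hom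

/-- The underlying morphism in `C` of a morphism of Hopf monoids. -/
def uhomH {K A : Hopf C} (f : K ⟶ A) : hCar K ⟶ hCar A := f.hom.hom.hom

/-- The zero morphism between two Hopf monoids (factoring through the trivial one). -/
def hzero (A B : Hopf C) : A ⟶ B :=
  InducedCategory.homMk (Bimon.toTrivial A.toBimon ≫ Bimon.trivialTo B.toBimon)

/-- The zero morphism between two cocommutative Hopf monoids. -/
def zeroH (A B : HopfCoc C) : A ⟶ B := InducedCategory.homMk (hzero A.obj B.obj)

end HopfBasics

section StructuresOnObjects

/-- A comonoid structure on a fixed object `Y` of `C`. -/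
structure ComonStructOn (Y : C) where
  counit : Y ⟶ 𝟙_ C
  comul : Y ⟶ Y ⊗ Y
  counit_comul : comul ≫ (counit ▷ Y) = (λ_ Y).inv
  comul_counit : comul ≫ (Y ◁ counit) = (ρ_ Y).inv
  comul_assoc : comul ≫ (Y ◁ comul) = comul ≫ (comul ▷ Y) ≫ (α_ Y Y Y).hom

variable [BraidedCategory C]

/-- A cocommutative comonoid structure on a fixed object `Y` of `C`. -/
structure CocommComonStructOn (Y : C) extends ComonStructOn Y where
  cocomm : comul ≫ (β_ Y Y).hom = comul

/-- A Hopf monoid structure on a fixed object `Y` of `C`. -/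
structure HopfStructOn (Y : C) extends ComonStructOn Y where
  mul : Y ⊗ Y ⟶ Y
  one : 𝟙_ C ⟶ Y
  one_mul : (one ▷ Y) ≫ mul = (λ_ Y).hom
  mul_one : (Y ◁ one) ≫ mul = (ρ_ Y).hom
  mul_assoc : (mul ▷ Y) ≫ mul = (α_ Y Y Y).hom ≫ (Y ◁ mul) ≫ mul
  mul_comul : mul ≫ comul = (comul ⊗ₘ comul) ≫ tensorμ Y Y Y Y ≫ (mul ⊗ₘ mul)
  one_comul : one ≫ comul = (λ_ (𝟙_ C)).inv ≫ (one ⊗ₘ one)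
  mul_counit : mul ≫ counit = (counit ⊗ₘ counit) ≫ (λ_ (𝟙_ C)).hom
  one_counit : one ≫ counit = 𝟙 (𝟙_ C)
  antipode : Y ⟶ Y
  antipode_left : comul ≫ (antipode ▷ Y) ≫ mul = counit ≫ one
  antipode_right : comul ≫ (Y ◁ antipode) ≫ mul = counit ≫ one

/-- A cocommutative Hopf monoid structure on a fixed object `Y` of `C`. -/
structure CocommHopfStructOn (Y : C) extends HopfStructOn Y where
  cocomm : comul ≫ (β_ Y Y).hom = comul

end StructuresOnObjects

section PhiHopf
variable [BraidedCategory C]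

/-- `φ_f = m_B(m_B ⊗ Id_B)(Id_B ⊗ f ⊗ Id_B) : (B ⊗ A) ⊗ B ⟶ B`. -/
def phiHopf {A B : Hopf C} (f : A ⟶ B) : (hCar B ⊗ hCar A) ⊗ hCar B ⟶ hCar B :=
  ((hCar B ◁ uhomH f) ▷ hCar B) ≫ (hMul B ▷ hCar B) ≫ hMul B

/-- `m_B(Id_B ⊗ ε_A ⊗ Id_B) : (B ⊗ A) ⊗ B ⟶ B`. -/
def phiHopfEps (A B : Hopf C) : (hCar B ⊗ hCar A) ⊗ hCar B ⟶ hCar B :=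
  ((hCar B ◁ hCounit A) ▷ hCar B) ≫ ((ρ_ (hCar B)).hom ▷ hCar B) ≫ hMul B

end PhiHopf

/-!
The coequalizer `π : B ⟶ Q` of `φ_f, φ_g` is the quotient of `B` by the two-sided ideal generated
by the relation `f = g`. Since `φ_f` and `φ_g` are `B`-bimodule maps and tensoring preserves
coequalizers, the multiplication of `B` descends along the epimorphism `π ⊗ π`; the counit, the
comultiplication followed by `π ⊗ π` and the antipode followed by `π` are (anti)multiplicative and
agree on `f` and `g`, hence on `φ_f` and `φ_g`, so they descend along `π`. The Hopf axioms on `Q`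
follow by cancelling the epimorphisms `π`, `π ⊗ π` and `(π ⊗ π) ⊗ π`. Conversely `f` is recovered
from `φ_f` by inserting units, so a bimonoid morphism out of `B` coequalizes `f, g` iff it
coequalizes `φ_f, φ_g`, which gives the universal property in `Hopf(C)`. Cocommutativity passes to
quotients, and the cokernel is the case `g = 0`, where `φ_0 = m(1 ⊗ ε ⊗ 1)`.
-/

open scoped MonObj ComonObj HopfObj

section RegularEpi

instance isRegularEpi_whiskerLeft
    [∀ X : C, PreservesColimitsOfShape WalkingParallelPair (tensorLeft X)]
    (X : C) {Y Z : C} (p : Y ⟶ Z) [IsRegularEpi p] : IsRegularEpi (X ◁ p) :=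
  isRegularEpi_of_regularEpi <| Cofork.IsColimit.regularEpi <|
    isColimitCoforkMapOfIsColimit (tensorLeft X) _ (IsRegularEpi.isColimit p)

instance isRegularEpi_whiskerRight
    [∀ X : C, PreservesColimitsOfShape WalkingParallelPair (tensorRight X)]
    (X : C) {Y Z : C} (p : Y ⟶ Z) [IsRegularEpi p] : IsRegularEpi (p ▷ X) :=
  isRegularEpi_of_regularEpi <| Cofork.IsColimit.regularEpi <|
    isColimitCoforkMapOfIsColimit (tensorRight X) _ (IsRegularEpi.isColimit p)

variable [∀ X : C, PreservesColimitsOfShape WalkingParallelPair (tensorLeft X)]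
  [∀ X : C, PreservesColimitsOfShape WalkingParallelPair (tensorRight X)]

instance epi_tensorHom_of_isRegularEpi {X₁ Y₁ X₂ Y₂ : C} (p₁ : X₁ ⟶ Y₁) (p₂ : X₂ ⟶ Y₂)
    [IsRegularEpi p₁] [IsRegularEpi p₂] : Epi (p₁ ⊗ₘ p₂) := by
  rw [MonoidalCategory.tensorHom_def]
  infer_instance

instance epi_tensorHom_tensorHom_of_isRegularEpi {X₁ Y₁ X₂ Y₂ X₃ Y₃ : C} (p₁ : X₁ ⟶ Y₁)
    (p₂ : X₂ ⟶ Y₂) (p₃ : X₃ ⟶ Y₃) [IsRegularEpi p₁] [IsRegularEpi p₂] [IsRegularEpi p₃] :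
    Epi ((p₁ ⊗ₘ p₂) ⊗ₘ p₃) := by
  rw [MonoidalCategory.tensorHom_def, MonoidalCategory.tensorHom_def p₁, comp_whiskerRight]
  infer_instance

theorem coequalizer.exists_tensorHom_desc {Z X Y : C} {a b : Z ⟶ X} [HasCoequalizer a b]
    (m : X ⊗ X ⟶ Y) (hl : X ◁ a ≫ m = X ◁ b ≫ m) (hr : a ▷ X ≫ m = b ▷ X ≫ m) :
    ∃ m' : coequalizer a b ⊗ coequalizer a b ⟶ Y,
      (coequalizer.π a b ⊗ₘ coequalizer.π a b) ≫ m' = m := by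
  obtain ⟨m₁, hm₁⟩ := Cofork.IsColimit.desc'
    (isColimitCoforkMapOfIsColimit (tensorLeft X) _ (coequalizerIsCoequalizer a b)) m hl
  replace hm₁ : X ◁ coequalizer.π a b ≫ m₁ = m := hm₁
  have hr₁ : a ▷ _ ≫ m₁ = b ▷ _ ≫ m₁ := by
    rw [← cancel_epi (Z ◁ coequalizer.π a b), whisker_exchange_assoc,
      whisker_exchange_assoc, hm₁, hr]
  obtain ⟨m', hm'⟩ := Cofork.IsColimit.desc'
    (isColimitCoforkMapOfIsColimit (tensorRight _) _ (coequalizerIsCoequalizer a b)) m₁ hr₁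
  replace hm' : coequalizer.π a b ▷ _ ≫ m' = m₁ := hm'
  exact ⟨m', by rw [tensorHom_def', Category.assoc, hm', hm₁]⟩

end RegularEpi

section StructOn
variable [BraidedCategory C] {Y : C}

@[reducible]
def HopfStructOn.toMonObj (s : HopfStructOn Y) : MonObj Y where
  one := s.one
  mul := s.mul
  one_mul := s.one_mul
  mul_one := s.mul_one
  mul_assoc := s.mul_assoc

@[reducible]
def HopfStructOn.toComonObj (s : HopfStructOn Y) : ComonObj Y where
  counit := s.counit
  comul := s.comul
  counit_comul := s.counit_comul
  comul_counit := s.comul_counit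
  comul_assoc := s.comul_assoc

@[reducible]
def HopfStructOn.toHopfObj (s : HopfStructOn Y) : HopfObj Y where
  toMonObj := s.toMonObj
  toComonObj := s.toComonObj
  mul_comul := s.mul_comul
  one_comul := by
    let := s.toMonObj
    rw [MonObj.tensorObj.one_def]
    exact s.one_comul
  mul_counit := by
    let := s.toComonObj
    rw [Comon.tensorObj_counit]
    exact s.mul_counit
  one_counit := s.one_counit
  antipode := s.antipode
  antipode_left := s.antipode_left
  antipode_right := s.antipode_right

theorem HopfStructOn.antipode_eq_of_bimonoid_eq {s t : HopfStructOn Y} (hmul : s.mul = t.mul)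
    (hone : s.one = t.one) (hcounit : s.counit = t.counit) (hcomul : s.comul = t.comul) :
    s.antipode = t.antipode := by
  -- Both antipodes are convolution inverses of `𝟙 Y`.
  let := t.toHopfObj
  let a : Conv Y Y := s.antipode
  let c : Conv Y Y := t.antipode
  let e : Conv Y Y := 𝟙 Y
  have hleft : a * e = 1 := by
    rw [Conv.mul_eq, Conv.one_eq, MonoidalCategory.whiskerLeft_id, Category.id_comp]
    show t.comul ≫ s.antipode ▷ Y ≫ t.mul = t.counit ≫ t.one
    rw [← hmul, ← hone, ← hcounit, ← hcomul]
    exact s.antipode_left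
  have hright : e * c = 1 := by
    rw [Conv.mul_eq, Conv.one_eq, MonoidalCategory.id_whiskerRight, Category.id_comp]
    exact t.antipode_right
  exact (left_inv_eq_right_inv hleft hright : a = c)

theorem HopfStructOn.ext_of_bimonoid_eq {s t : HopfStructOn Y} (hmul : s.mul = t.mul)
    (hone : s.one = t.one) (hcounit : s.counit = t.counit) (hcomul : s.comul = t.comul) :
    s = t := by
  have hantipode := HopfStructOn.antipode_eq_of_bimonoid_eq hmul hone hcounit hcomul
  rcases s with ⟨⟨_, _, _, _, _⟩, _, _, _, _, _, _, _, _, _, _, _, _⟩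
  rcases t with ⟨⟨_, _, _, _, _⟩, _, _, _, _, _, _, _, _, _, _, _, _⟩
  dsimp only at hmul hone hcounit hcomul hantipode
  subst hmul hone hcounit hcomul hantipode
  rfl

end StructOn

section Descent

theorem tensorHom_comp_whiskerLeft_of_comp_eq {X₁ Y₁ X₂ Y₂ Z₂ W₂ : C} (p₁ : X₁ ⟶ Y₁)
    {p₂ : X₂ ⟶ Y₂} {φ : Y₂ ⟶ Z₂} {ψ : X₂ ⟶ W₂} {q₂ : W₂ ⟶ Z₂} (h : p₂ ≫ φ = ψ ≫ q₂) :
    (p₁ ⊗ₘ p₂) ≫ Y₁ ◁ φ = X₁ ◁ ψ ≫ (p₁ ⊗ₘ q₂) := by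
  simp only [← id_tensorHom, tensorHom_comp_tensorHom, h, Category.comp_id, Category.id_comp]

theorem tensorHom_comp_whiskerRight_of_comp_eq {X₁ Y₁ Z₁ W₁ X₂ Y₂ : C} {p₁ : X₁ ⟶ Y₁}
    (p₂ : X₂ ⟶ Y₂) {φ : Y₁ ⟶ Z₁} {ψ : X₁ ⟶ W₁} {q₁ : W₁ ⟶ Z₁} (h : p₁ ≫ φ = ψ ≫ q₁) :
    (p₁ ⊗ₘ p₂) ≫ φ ▷ Y₂ = ψ ▷ X₂ ≫ (q₁ ⊗ₘ p₂) := by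
  simp only [← tensorHom_id, tensorHom_comp_tensorHom, h, Category.comp_id, Category.id_comp]

variable [BraidedCategory C] {X Y : C} [HopfObj X] (p : X ⟶ Y) [Epi p]

def HopfStructOn.ofEpi [Epi (p ⊗ₘ p)] [Epi ((p ⊗ₘ p) ⊗ₘ p)]
    (one : 𝟙_ C ⟶ Y) (mul : Y ⊗ Y ⟶ Y) (counit : Y ⟶ 𝟙_ C) (comul : Y ⟶ Y ⊗ Y)
    (antipode : Y ⟶ Y) (one_eq : η[X] ≫ p = one) (mul_eq : (p ⊗ₘ p) ≫ mul = μ[X] ≫ p)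
    (counit_eq : p ≫ counit = ε[X]) (comul_eq : p ≫ comul = Δ[X] ≫ (p ⊗ₘ p))
    (antipode_eq : p ≫ antipode = 𝒮[X] ≫ p) : HopfStructOn Y where
  counit := counit
  comul := comul
  counit_comul := by
    have h := tensorHom_comp_whiskerRight_of_comp_eq p (counit_eq.trans (Category.comp_id _).symm)
    rw [← cancel_epi p, reassoc_of% comul_eq, h, id_tensorHom, ComonObj.counit_comul_assoc,
      leftUnitor_inv_naturality]
  comul_counit := by
    have h := tensorHom_comp_whiskerLeft_of_comp_eq p (counit_eq.trans (Category.comp_id _).symm)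
    rw [← cancel_epi p, reassoc_of% comul_eq, h, tensorHom_id, ComonObj.comul_counit_assoc,
      rightUnitor_inv_naturality]
  comul_assoc := by
    rw [← cancel_epi p, reassoc_of% comul_eq, reassoc_of% comul_eq,
      tensorHom_comp_whiskerLeft_of_comp_eq p comul_eq,
      reassoc_of% tensorHom_comp_whiskerRight_of_comp_eq p comul_eq, associator_naturality,
      ComonObj.comul_assoc_assoc]
  mul := mul
  one := one
  one_mul := by
    have : Epi (𝟙_ C ◁ p) := by rw [id_whiskerLeft]; infer_instance
    rw [← cancel_epi (𝟙_ C ◁ p), ← one_eq, comp_whiskerRight_assoc, whisker_exchange_assoc,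
      ← tensorHom_def'_assoc, mul_eq, MonObj.one_mul_assoc, leftUnitor_naturality]
  mul_one := by
    have : Epi (p ▷ 𝟙_ C) := by rw [whiskerRight_id]; infer_instance
    rw [← cancel_epi (p ▷ 𝟙_ C), ← one_eq, MonoidalCategory.whiskerLeft_comp_assoc,
      ← whisker_exchange_assoc, ← MonoidalCategory.tensorHom_def_assoc, mul_eq,
      MonObj.mul_one_assoc, rightUnitor_naturality]
  mul_assoc := by
    rw [← cancel_epi ((p ⊗ₘ p) ⊗ₘ p), reassoc_of% tensorHom_comp_whiskerRight_of_comp_eq p mul_eq,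
      mul_eq, MonObj.mul_assoc_assoc, associator_naturality_assoc,
      reassoc_of% tensorHom_comp_whiskerLeft_of_comp_eq p mul_eq, mul_eq]
  mul_comul := by
    rw [← cancel_epi (p ⊗ₘ p), reassoc_of% mul_eq, comul_eq, BimonObj.mul_comul_assoc,
      tensorHom_comp_tensorHom_assoc, comul_eq, ← tensorHom_comp_tensorHom_assoc,
      tensorμ_natural_assoc, tensorHom_comp_tensorHom (p ⊗ₘ p), mul_eq, tensorHom_comp_tensorHom]
  one_comul := by
    rw [← one_eq, Category.assoc, comul_eq, BimonObj.one_comul_assoc, MonObj.tensorObj.one_def,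
      Category.assoc, tensorHom_comp_tensorHom]
  mul_counit := by
    rw [← cancel_epi (p ⊗ₘ p), reassoc_of% mul_eq, counit_eq, BimonObj.mul_counit,
      Comon.tensorObj_counit, tensorHom_comp_tensorHom_assoc, counit_eq]
  one_counit := by
    rw [← one_eq, Category.assoc, counit_eq, BimonObj.one_counit]
  antipode := antipode
  antipode_left := by
    rw [← cancel_epi p, reassoc_of% comul_eq,
      reassoc_of% tensorHom_comp_whiskerRight_of_comp_eq p antipode_eq, mul_eq,
      HopfObj.antipode_left_assoc, ← one_eq, reassoc_of% counit_eq]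
  antipode_right := by
    rw [← cancel_epi p, reassoc_of% comul_eq,
      reassoc_of% tensorHom_comp_whiskerLeft_of_comp_eq p antipode_eq, mul_eq,
      HopfObj.antipode_right_assoc, ← one_eq, reassoc_of% counit_eq]

end Descent

section HopfHom
variable [BraidedCategory C]

instance isBimonHom_uhomH {A B : Hopf C} (f : A ⟶ B) : IsBimonHom (uhomH f) where
  one_hom := IsMonHom.one_hom f.hom.hom.hom
  mul_hom := IsMonHom.mul_hom f.hom.hom.hom
  hom_counit := congrArg Mon.Hom.hom f.hom.isComonHom_hom.hom_counit
  hom_comul := congrArg Mon.Hom.hom f.hom.isComonHom_hom.hom_comul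

def Hopf.homMk {A B : Hopf C} (h : A.X ⟶ B.X) [IsBimonHom h] : A ⟶ B :=
  InducedCategory.homMk (Comon.Hom.mk' (Mon.Hom.mk' h (IsMonHom.one_hom h) (IsMonHom.mul_hom h))
    (Mon.Hom.ext (IsComonHom.hom_counit h)) (Mon.Hom.ext (IsComonHom.hom_comul h)))

theorem Hopf.hom_ext {A B : Hopf C} {f g : A ⟶ B} (w : uhomH f = uhomH g) : f = g :=
  InducedCategory.hom_ext (Bimon.ext w)

end HopfHom

section Phi
variable [BraidedCategory C] {A B : Hopf C}

theorem phiHopf_comp_eq_of_comp_eq (f g : A ⟶ B) {T : C} (t : hCar B ⟶ T) (mT : T ⊗ T ⟶ T)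
    (ht : hMul B ≫ t = (t ⊗ₘ t) ≫ mT) (hfg : uhomH f ≫ t = uhomH g ≫ t) :
    phiHopf f ≫ t = phiHopf g ≫ t := by
  have hφ (h : A ⟶ B) :
      phiHopf h ≫ t = ((t ⊗ₘ (uhomH h ≫ t)) ⊗ₘ t) ≫ (mT ▷ T) ≫ mT := by
    simp only [phiHopf, Category.assoc, ht, ← tensorHom_id, ← id_tensorHom,
      tensorHom_comp_tensorHom_assoc, Category.id_comp, Category.comp_id]
  rw [hφ, hφ, hfg]

theorem whiskerLeft_phiHopf_mul (h : A ⟶ B) :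
    (hCar B ◁ phiHopf h) ≫ hMul B =
      (α_ (hCar B) (hCar B ⊗ hCar A) (hCar B)).inv ≫
        ((α_ (hCar B) (hCar B) (hCar A)).inv ▷ hCar B) ≫
        ((hMul B ▷ hCar A) ▷ hCar B) ≫ phiHopf h := by
  simp only [phiHopf, MonoidalCategory.whiskerLeft_comp, Category.assoc]
  slice_lhs 3 4 => rw [MonObj.mul_assoc_flip]
  slice_lhs 2 3 => rw [associator_inv_naturality_middle]
  slice_lhs 3 4 => rw [← comp_whiskerRight, MonObj.mul_assoc_flip]
  simp only [comp_whiskerRight, Category.assoc]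
  slice_lhs 1 2 => rw [associator_inv_naturality_middle]
  slice_lhs 2 3 => rw [← comp_whiskerRight, associator_inv_naturality_right, comp_whiskerRight]
  slice_rhs 3 4 => rw [← comp_whiskerRight, ← whisker_exchange, comp_whiskerRight]
  simp only [Category.assoc]

theorem phiHopf_whiskerRight_mul (h : A ⟶ B) :
    (phiHopf h ▷ hCar B) ≫ hMul B =
      (α_ (hCar B ⊗ hCar A) (hCar B) (hCar B)).hom ≫ ((hCar B ⊗ hCar A) ◁ hMul B) ≫
        phiHopf h := by
  simp only [phiHopf, comp_whiskerRight, Category.assoc]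
  slice_rhs 2 3 => rw [whisker_exchange]
  slice_rhs 3 4 => rw [whisker_exchange]
  slice_rhs 1 2 => rw [← associator_naturality_left]
  slice_rhs 2 3 => rw [← associator_naturality_left]
  slice_lhs 3 4 => rw [MonObj.mul_assoc]
  simp only [Category.assoc]

theorem insertUnits_comp_phiHopf (h : A ⟶ B) :
    ((λ_ (hCar A)).inv ≫ (hOne B ▷ hCar A) ≫ (ρ_ (hCar B ⊗ hCar A)).inv ≫
      ((hCar B ⊗ hCar A) ◁ hOne B)) ≫ phiHopf h = uhomH h := by
  simp only [phiHopf, Category.assoc]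
  slice_lhs 4 5 => rw [whisker_exchange]
  slice_lhs 5 6 => rw [whisker_exchange]
  slice_lhs 6 7 => rw [MonObj.mul_one]
  slice_lhs 3 4 => rw [← rightUnitor_inv_naturality]
  slice_lhs 4 5 => rw [← rightUnitor_inv_naturality]
  slice_lhs 5 6 => rw [Iso.inv_hom_id]
  simp only [Category.comp_id]
  slice_lhs 2 3 => rw [← whisker_exchange]
  slice_lhs 3 4 => rw [MonObj.one_mul]
  slice_lhs 1 2 => rw [← leftUnitor_inv_naturality]
  simp

theorem comp_eq_of_phiHopf_comp_eq {f g : A ⟶ B} {T : C} {t : hCar B ⟶ T}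
    (h : phiHopf f ≫ t = phiHopf g ≫ t) : uhomH f ≫ t = uhomH g ≫ t := by
  rw [← insertUnits_comp_phiHopf f, ← insertUnits_comp_phiHopf g, Category.assoc _ (phiHopf f),
    Category.assoc _ (phiHopf g), h]

theorem phiHopf_hzero (A B : Hopf C) : phiHopf (hzero A B) = phiHopfEps A B := by
  have hzero_eq : uhomH (hzero A B) = hCounit A ≫ hOne B := rfl
  simp only [phiHopf, phiHopfEps, hzero_eq, MonoidalCategory.whiskerLeft_comp, comp_whiskerRight,
    Category.assoc]
  slice_lhs 2 3 => rw [← comp_whiskerRight, MonObj.mul_one]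

end Phi

theorem IsBimonHom.of_epi_comp [BraidedCategory C] {X Y Z : C} [BimonObj X] [BimonObj Y]
    [BimonObj Z] (p : X ⟶ Y) [IsBimonHom p] [Epi p] [Epi (p ⊗ₘ p)] {d : Y ⟶ Z} {t : X ⟶ Z}
    [IsBimonHom t] (h : p ≫ d = t) : IsBimonHom d where
  one_hom := by rw [← IsMonHom.one_hom p, Category.assoc, h, IsMonHom.one_hom]
  mul_hom := by
    rw [← cancel_epi (p ⊗ₘ p), ← IsMonHom.mul_hom_assoc, h, IsMonHom.mul_hom,
      tensorHom_comp_tensorHom_assoc, h]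
  hom_counit := by rw [← cancel_epi p, reassoc_of% h, IsComonHom.hom_counit, IsComonHom.hom_counit]
  hom_comul := by
    rw [← cancel_epi p, reassoc_of% h, IsComonHom.hom_comul, IsComonHom.hom_comul_assoc,
      tensorHom_comp_tensorHom, h]

theorem isCocomm_of_epi [BraidedCategory C] {B Q : Hopf C} (p : hCar B ⟶ hCar Q) [IsComonHom p]
    [Epi p] (hB : IsCocomm B) : IsCocomm Q := by
  unfold IsCocomm at hB ⊢
  rw [← cancel_epi p, IsComonHom.hom_comul_assoc, BraidedCategory.braiding_naturality,
    reassoc_of% hB, IsComonHom.hom_comul]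

section Quotient
variable [BraidedCategory C] [HasCoequalizers C] {A B : Hopf C} (f g : A ⟶ B)

noncomputable abbrev coeqπ : hCar B ⟶ coequalizer (phiHopf f) (phiHopf g) := coequalizer.π _ _

theorem uhomH_comp_coeqπ : uhomH f ≫ coeqπ f g = uhomH g ≫ coeqπ f g :=
  comp_eq_of_phiHopf_comp_eq (coequalizer.condition _ _)

noncomputable def coeqCounit : coequalizer (phiHopf f) (phiHopf g) ⟶ 𝟙_ C :=
  coequalizer.desc (hCounit B) <|
    phiHopf_comp_eq_of_comp_eq f g _ _ (Bimon.mul_counit _) <| by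
      rw [IsComonHom.hom_counit, IsComonHom.hom_counit]

variable [∀ X : C, PreservesColimitsOfShape WalkingParallelPair (tensorLeft X)]
  [∀ X : C, PreservesColimitsOfShape WalkingParallelPair (tensorRight X)]

theorem exists_mul_coeqπ :
    ∃ m, (coeqπ f g ⊗ₘ coeqπ f g) ≫ m = hMul B ≫ coeqπ f g := by
  refine coequalizer.exists_tensorHom_desc _ ?_ ?_
  · rw [reassoc_of% whiskerLeft_phiHopf_mul f, reassoc_of% whiskerLeft_phiHopf_mul g,
      coequalizer.condition]
  · rw [reassoc_of% phiHopf_whiskerRight_mul f, reassoc_of% phiHopf_whiskerRight_mul g,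
      coequalizer.condition]

noncomputable def coeqMul :
    coequalizer (phiHopf f) (phiHopf g) ⊗ coequalizer (phiHopf f) (phiHopf g) ⟶
      coequalizer (phiHopf f) (phiHopf g) :=
  (exists_mul_coeqπ f g).choose

theorem tensorHom_coeqπ_comp_coeqMul :
    (coeqπ f g ⊗ₘ coeqπ f g) ≫ coeqMul f g = hMul B ≫ coeqπ f g :=
  (exists_mul_coeqπ f g).choose_spec

noncomputable def coeqComul : coequalizer (phiHopf f) (phiHopf g) ⟶
    coequalizer (phiHopf f) (phiHopf g) ⊗ coequalizer (phiHopf f) (phiHopf g) :=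
  coequalizer.desc (hComul B ≫ (coeqπ f g ⊗ₘ coeqπ f g)) <|
    phiHopf_comp_eq_of_comp_eq f g _ (tensorμ _ _ _ _ ≫ (coeqMul f g ⊗ₘ coeqMul f g))
      (by
        rw [BimonObj.mul_comul_assoc, ← tensorHom_comp_tensorHom_assoc, tensorμ_natural_assoc,
          tensorHom_comp_tensorHom (coeqπ f g ⊗ₘ coeqπ f g), tensorHom_coeqπ_comp_coeqMul,
          tensorHom_comp_tensorHom])
      (by
        rw [IsComonHom.hom_comul_assoc, IsComonHom.hom_comul_assoc, tensorHom_comp_tensorHom,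
          tensorHom_comp_tensorHom, uhomH_comp_coeqπ])

noncomputable def coeqAntipode : coequalizer (phiHopf f) (phiHopf g) ⟶
    coequalizer (phiHopf f) (phiHopf g) :=
  coequalizer.desc (hS B ≫ coeqπ f g) <|
    phiHopf_comp_eq_of_comp_eq f g _ ((β_ _ _).hom ≫ coeqMul f g)
      (by
        rw [reassoc_of% HopfObj.mul_antipode, ← tensorHom_coeqπ_comp_coeqMul,
          BraidedCategory.braiding_naturality_assoc, tensorHom_comp_tensorHom_assoc,
          BraidedCategory.braiding_naturality_assoc])
      (by
        rw [reassoc_of% HopfObj.hom_antipode, reassoc_of% HopfObj.hom_antipode, uhomH_comp_coeqπ])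

noncomputable def coeqHopfStruct : HopfStructOn (coequalizer (phiHopf f) (phiHopf g)) :=
  HopfStructOn.ofEpi (coeqπ f g) (hOne B ≫ coeqπ f g) (coeqMul f g) (coeqCounit f g)
    (coeqComul f g) (coeqAntipode f g) rfl (tensorHom_coeqπ_comp_coeqMul f g)
    (coequalizer.π_desc _ _) (coequalizer.π_desc _ _) (coequalizer.π_desc _ _)

noncomputable instance : HopfObj (coequalizer (phiHopf f) (phiHopf g)) :=
  (coeqHopfStruct f g).toHopfObj

noncomputable abbrev coeqHopf : Hopf C := .mk (coequalizer (phiHopf f) (phiHopf g))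

instance : IsBimonHom (coeqπ f g) where
  one_hom := rfl
  mul_hom := (tensorHom_coeqπ_comp_coeqMul f g).symm
  hom_counit := coequalizer.π_desc _ _
  hom_comul := coequalizer.π_desc _ _

noncomputable def coeqHopfπ : B ⟶ coeqHopf f g := Hopf.homMk (coeqπ f g)

theorem coeqHopfπ_comp_eq : f ≫ coeqHopfπ f g = g ≫ coeqHopfπ f g :=
  Hopf.hom_ext (uhomH_comp_coeqπ f g)

noncomputable def coeqHopfπIsColimit :
    IsColimit (Cofork.ofπ (coeqHopfπ f g) (coeqHopfπ_comp_eq f g)) :=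
  Cofork.IsColimit.mk' _ fun s => by
    have hw : phiHopf f ≫ uhomH s.π = phiHopf g ≫ uhomH s.π :=
      phiHopf_comp_eq_of_comp_eq f g _ _ (IsMonHom.mul_hom _) (congrArg uhomH s.condition)
    have := IsBimonHom.of_epi_comp (coeqπ f g) (coequalizer.π_desc (uhomH s.π) hw)
    exact ⟨Hopf.homMk (coequalizer.desc (uhomH s.π) hw),
      Hopf.hom_ext (coequalizer.π_desc _ _),
      fun hm => Hopf.hom_ext (coequalizer.hom_ext
        ((congrArg uhomH hm).trans (coequalizer.π_desc _ _).symm))⟩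

theorem coeqHopfStruct_unique (s : HopfStructOn (coequalizer (phiHopf f) (phiHopf g)))
    (hmul : (coeqπ f g ⊗ₘ coeqπ f g) ≫ s.mul = hMul B ≫ coeqπ f g)
    (hone : hOne B ≫ coeqπ f g = s.one) (hcounit : coeqπ f g ≫ s.counit = hCounit B)
    (hcomul : coeqπ f g ≫ s.comul = hComul B ≫ (coeqπ f g ⊗ₘ coeqπ f g)) :
    s = coeqHopfStruct f g :=
  HopfStructOn.ext_of_bimonoid_eq
    ((cancel_epi _).1 (hmul.trans (tensorHom_coeqπ_comp_coeqMul f g).symm)) hone.symm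
    ((cancel_epi _).1 (hcounit.trans (coequalizer.π_desc _ _).symm))
    ((cancel_epi _).1 (hcomul.trans (coequalizer.π_desc _ _).symm))

theorem existsUnique_hopfStructOn_coequalizer :
    ∃! s : HopfStructOn (coequalizer (phiHopf f) (phiHopf g)),
      (coequalizer.π (phiHopf f) (phiHopf g) ⊗ₘ coequalizer.π (phiHopf f) (phiHopf g)) ≫
          s.mul = hMul B ≫ coequalizer.π (phiHopf f) (phiHopf g) ∧
      hOne B ≫ coequalizer.π (phiHopf f) (phiHopf g) = s.one ∧
      coequalizer.π (phiHopf f) (phiHopf g) ≫ s.counit = hCounit B ∧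
      coequalizer.π (phiHopf f) (phiHopf g) ≫ s.comul =
        hComul B ≫
          (coequalizer.π (phiHopf f) (phiHopf g) ⊗ₘ coequalizer.π (phiHopf f) (phiHopf g)) :=
  ⟨coeqHopfStruct f g,
    ⟨tensorHom_coeqπ_comp_coeqMul f g, rfl, coequalizer.π_desc _ _, coequalizer.π_desc _ _⟩,
    fun s ⟨hmul, hone, hcounit, hcomul⟩ => coeqHopfStruct_unique f g s hmul hone hcounit hcomul⟩

theorem exists_hopf_coequalizer :
    ∃ (Qh : Hopf C) (πh : B ⟶ Qh)
      (w : phiHopf f ≫ uhomH πh = phiHopf g ≫ uhomH πh) (w2 : f ≫ πh = g ≫ πh),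
      Nonempty (IsColimit (Cofork.ofπ (uhomH πh) w)) ∧
      Nonempty (IsColimit (Cofork.ofπ πh w2)) :=
  ⟨coeqHopf f g, coeqHopfπ f g, coequalizer.condition _ _, coeqHopfπ_comp_eq f g,
    ⟨coequalizerIsCoequalizer _ _⟩, ⟨coeqHopfπIsColimit f g⟩⟩

end Quotient

noncomputable def HopfCoc.isColimitCoforkOfIsColimitHom [BraidedCategory C] {A B Q : HopfCoc C}
    {f g : A ⟶ B} (π : B ⟶ Q) (w : f ≫ π = g ≫ π)
    (h : IsColimit (Cofork.ofπ π.hom (congrArg InducedCategory.Hom.hom w))) :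
    IsColimit (Cofork.ofπ π w) :=
  Cofork.IsColimit.mk' _ fun s =>
    have hs := congrArg InducedCategory.Hom.hom s.condition
    ⟨InducedCategory.homMk (Cofork.IsColimit.desc h s.π.hom hs),
      InducedCategory.hom_ext (Cofork.IsColimit.π_desc h),
      fun hm => InducedCategory.hom_ext (Cofork.IsColimit.hom_ext h
        ((congrArg InducedCategory.Hom.hom hm).trans (Cofork.IsColimit.π_desc' h s.π.hom hs).symm))⟩

theorem exists_hopfCoc_coequalizer [BraidedCategory C] [HasCoequalizers C]
    [∀ X : C, PreservesColimitsOfShape WalkingParallelPair (tensorLeft X)]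
    [∀ X : C, PreservesColimitsOfShape WalkingParallelPair (tensorRight X)]
    {A B : HopfCoc C} (f g : A ⟶ B) :
    ∃ (Qh : HopfCoc C) (πh : B ⟶ Qh)
      (w : phiHopf (f.hom : A.obj ⟶ B.obj) ≫ uhom πh = phiHopf (g.hom : A.obj ⟶ B.obj) ≫ uhom πh)
      (w2 : f ≫ πh = g ≫ πh),
      Nonempty (IsColimit (Cofork.ofπ (uhom πh) w)) ∧
      Nonempty (IsColimit (Cofork.ofπ πh w2)) := by
  let Q : HopfCoc C := ⟨coeqHopf f.hom g.hom, isCocomm_of_epi (coeqπ f.hom g.hom) B.property⟩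
  let πc : B ⟶ Q := InducedCategory.homMk (coeqHopfπ f.hom g.hom)
  have w2 : f ≫ πc = g ≫ πc := InducedCategory.hom_ext (coeqHopfπ_comp_eq f.hom g.hom)
  exact ⟨Q, πc, coequalizer.condition _ _, w2, ⟨coequalizerIsCoequalizer _ _⟩,
    ⟨HopfCoc.isColimitCoforkOfIsColimitHom πc w2 (coeqHopfπIsColimit f.hom g.hom)⟩⟩

/-- **Statement 10.** In a braided monoidal category with equalizers and coequalizers
preserved by tensoring, the coequalizer of `f, g : A ⟶ B` in `Hopf(M)` is computed as the
coequalizer in `M` of `(φ_f, φ_g)`, which carries a unique Hopf monoid structure making the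
projection a morphism of Hopf monoids; the same holds in `Hopf_coc(M)`; and the cokernel of
`f` is the coequalizer in `M` of `(φ_f, m_B(Id ⊗ ε_A ⊗ Id))`. -/
theorem hopf_coequalizers
    [BraidedCategory C] [HasEqualizers C] [HasCoequalizers C]
    [∀ X : C, PreservesLimitsOfShape WalkingParallelPair (tensorLeft X)]
    [∀ X : C, PreservesLimitsOfShape WalkingParallelPair (tensorRight X)]
    [∀ X : C, PreservesColimitsOfShape WalkingParallelPair (tensorLeft X)]
    [∀ X : C, PreservesColimitsOfShape WalkingParallelPair (tensorRight X)] :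
    (∀ (A B : Hopf C) (f g : A ⟶ B),
      (∃! s : HopfStructOn (coequalizer (phiHopf f) (phiHopf g)),
        (coequalizer.π (phiHopf f) (phiHopf g) ⊗ₘ coequalizer.π (phiHopf f) (phiHopf g)) ≫
            s.mul = hMul B ≫ coequalizer.π (phiHopf f) (phiHopf g) ∧
        hOne B ≫ coequalizer.π (phiHopf f) (phiHopf g) = s.one ∧
        coequalizer.π (phiHopf f) (phiHopf g) ≫ s.counit = hCounit B ∧
        coequalizer.π (phiHopf f) (phiHopf g) ≫ s.comul =
          hComul B ≫
            (coequalizer.π (phiHopf f) (phiHopf g) ⊗ₘ coequalizer.π (phiHopf f) (phiHopf g))) ∧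
      (∃ (Qh : Hopf C) (πh : B ⟶ Qh)
         (w : phiHopf f ≫ uhomH πh = phiHopf g ≫ uhomH πh) (w2 : f ≫ πh = g ≫ πh),
         Nonempty (IsColimit (Cofork.ofπ (uhomH πh) w)) ∧
         Nonempty (IsColimit (Cofork.ofπ πh w2)))) ∧
    (∀ (A B : HopfCoc C) (f g : A ⟶ B),
      ∃ (Qh : HopfCoc C) (πh : B ⟶ Qh)
        (w : phiHopf (f.hom : A.obj ⟶ B.obj) ≫ uhom πh = phiHopf (g.hom : A.obj ⟶ B.obj) ≫ uhom πh)
        (w2 : f ≫ πh = g ≫ πh),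
        Nonempty (IsColimit (Cofork.ofπ (uhom πh) w)) ∧
        Nonempty (IsColimit (Cofork.ofπ πh w2))) ∧
    (∀ (A B : Hopf C) (f : A ⟶ B),
      ∃ (Qh : Hopf C) (ch : B ⟶ Qh)
        (w : phiHopf f ≫ uhomH ch = phiHopfEps A B ≫ uhomH ch)
        (w2 : f ≫ ch = hzero A B ≫ ch),
        Nonempty (IsColimit (Cofork.ofπ (uhomH ch) w)) ∧
        Nonempty (IsColimit (Cofork.ofπ ch w2))) := by
  refine ⟨fun A B f g => ⟨existsUnique_hopfStructOn_coequalizer f g, exists_hopf_coequalizer f g⟩,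
    fun A B f g => exists_hopfCoc_coequalizer f g, fun A B f => ?_⟩
  rw [← phiHopf_hzero A B]
  exact exists_hopf_coequalizer f (hzero A B)

end HopfSemiabelian
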